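/- arXiv:0906.2077 — 3 statements merged into one kernel-verified Lean document; each statement's English description precedes it below -/
import Mathlib

section
/- Let q, h, a : ℝ → ℝ³ be a smooth Frenet frame of a timelike ruled surface of type M₊¹ (⟨q,q⟩ = 1, ⟨h,h⟩ = -1, ⟨a,a⟩ = 1) with Frenet equations q' = σ h, h' = σ q + σκ a, a' = σκ h. Let c satisfy c' = q and let R be constant. Define c* = c + R a and q* = cos θ · q + sin θ · h. If sin θ - Rκσ cos θ = 0 with cos θ ≠ 0, then (c*)' is proportional to q* (so the Mannheim offset of type M₊² is developable). -/
/-- Minkowski inner product on ℝ³: ⟨x,y⟩ = -x₁y₁ + x₂y₂ + x₃y₃. -/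
def mdot (x y : Fin 3 → ℝ) : ℝ := -(x 0 * y 0) + x 1 * y 1 + x 2 * y 2

/-- Lorentzian cross product. -/
def mcross (x y : Fin 3 → ℝ) : Fin 3 → ℝ :=
  ![x 1 * y 2 - x 2 * y 1, x 0 * y 2 - x 2 * y 0, x 1 * y 0 - x 0 * y 1]

theorem deriv_add_const_smul {E : Type*} [NormedAddCommGroup E] [NormedSpace ℝ E]
    {c a : ℝ → E} {s : ℝ} (hc : DifferentiableAt ℝ c s) (ha : DifferentiableAt ℝ a s) (R : ℝ) :
    deriv (fun t => c t + R • a t) s = deriv c s + R • deriv a s := by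
  rw [deriv_fun_add (g := fun t => R • a t) hc (ha.const_smul R), deriv_fun_const_smul R ha]

theorem add_smul_eq_one_div_smul_of_eq_mul {V : Type*} [AddCommGroup V] [Module ℝ V]
    {x y k : ℝ} (hx : x ≠ 0) (hy : y = k * x) (v w : V) :
    v + k • w = (1 / x) • (x • v + y • w) := by
  rw [smul_add, smul_smul, smul_smul, hy, one_div_mul_cancel hx, one_smul]
  congr 2
  field_simp

theorem mannheim_offset_developable_M1plus_general (q h a c : ℝ → Fin 3 → ℝ)
    (κ σ θ : ℝ → ℝ) (R : ℝ)
    (ha : Differentiable ℝ a)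
    (hc : Differentiable ℝ c)
    (fa : ∀ s, deriv a s = (σ s * κ s) • h s)
    (fc : ∀ s, deriv c s = q s)
    (hcos : ∀ s, Real.cos (θ s) ≠ 0)
    (hman : ∀ s, Real.sin (θ s) - R * κ s * σ s * Real.cos (θ s) = 0) :
    ∀ s, deriv (fun t => c t + R • a t) s
      = (1 / Real.cos (θ s)) • (Real.cos (θ s) • q s + Real.sin (θ s) • h s) := by
  intro s
  have hsin : Real.sin (θ s) = (R * (σ s * κ s)) * Real.cos (θ s) := by
    linear_combination hman s
  rw [deriv_add_const_smul (hc s) (ha s), fc, fa, smul_smul]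
  exact add_smul_eq_one_div_smul_of_eq_mul (hcos s) hsin (q s) (h s)

/-- If sin θ - Rκσ cos θ = 0 (R constant), the striction curve of the Mannheim
offset of type M₊² of a timelike ruled surface of type M₊¹ has tangent
parallel to the ruling q* = cos θ · q + sin θ · h, so the offset is developable. -/
theorem mannheim_offset_developable_M1plus (q h a c : ℝ → Fin 3 → ℝ)
    (κ σ θ : ℝ → ℝ) (R : ℝ)
    (hq : Differentiable ℝ q) (hh : Differentiable ℝ h) (ha : Differentiable ℝ a)
    (hc : Differentiable ℝ c)
    (hqq : ∀ s, mdot (q s) (q s) = 1)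
    (hhh : ∀ s, mdot (h s) (h s) = -1)
    (haa : ∀ s, mdot (a s) (a s) = 1)
    (hqh : ∀ s, mdot (q s) (h s) = 0)
    (hqa : ∀ s, mdot (q s) (a s) = 0)
    (hha : ∀ s, mdot (h s) (a s) = 0)
    (fq : ∀ s, deriv q s = σ s • h s)
    (fh : ∀ s, deriv h s = σ s • q s + (σ s * κ s) • a s)
    (fa : ∀ s, deriv a s = (σ s * κ s) • h s)
    (fc : ∀ s, deriv c s = q s)
    (hcos : ∀ s, Real.cos (θ s) ≠ 0)
    (hman : ∀ s, Real.sin (θ s) - R * κ s * σ s * Real.cos (θ s) = 0) :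
    ∀ s, deriv (fun t => c t + R • a t) s
      = (1 / Real.cos (θ s)) • (Real.cos (θ s) • q s + Real.sin (θ s) • h s) :=
  mannheim_offset_developable_M1plus_general q h a c κ σ θ R ha hc fa fc hcos hman
end

section
/- Let q, h, a be the Frenet frame of a timelike ruled surface of type M₊¹ with equations q' = σ h, h' = σ q + σκ a, a' = σκ h. If R is a nonzero constant and tan θ = Rκσ with θ' = -σ, then κ satisfies κ' = -(1/R)(R²κ²σ² + 1) - (σ'/σ)κ. -/
/-- Differentiating tan θ = Rκσ with θ' = -σ yields the Mannheim condition
κ' = -(1/R)(R²κ²σ² + 1) - (σ'/σ)κ for type M₊¹. -/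
theorem mannheim_curvature_relation_M1plus (q h a : ℝ → Fin 3 → ℝ)
    (κ σ θ : ℝ → ℝ) (R : ℝ) (hR : R ≠ 0)
    (hq : Differentiable ℝ q) (hh : Differentiable ℝ h) (ha : Differentiable ℝ a)
    (hκ : Differentiable ℝ κ) (hσ : Differentiable ℝ σ) (hθ : Differentiable ℝ θ)
    (hqq : ∀ s, mdot (q s) (q s) = 1)
    (hhh : ∀ s, mdot (h s) (h s) = -1)
    (haa : ∀ s, mdot (a s) (a s) = 1)
    (hqh : ∀ s, mdot (q s) (h s) = 0)
    (hqa : ∀ s, mdot (q s) (a s) = 0)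
    (hha : ∀ s, mdot (h s) (a s) = 0)
    (fq : ∀ s, deriv q s = σ s • h s)
    (fh : ∀ s, deriv h s = σ s • q s + (σ s * κ s) • a s)
    (fa : ∀ s, deriv a s = (σ s * κ s) • h s)
    (hσpos : ∀ s, 0 < σ s)
    (hcos : ∀ s, Real.cos (θ s) ≠ 0)
    (htan : ∀ s, Real.tan (θ s) = R * κ s * σ s)
    (hθ' : ∀ s, deriv θ s = -σ s) :
    ∀ s, deriv κ s
      = -(1 / R) * (R ^ 2 * (κ s) ^ 2 * (σ s) ^ 2 + 1) - (deriv σ s / σ s) * κ s := by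
  intro s
  have h1 : HasDerivAt (fun t => Real.tan (θ t))
      (1 / Real.cos (θ s) ^ 2 * deriv θ s) s :=
    (Real.hasDerivAt_tan (hcos s)).comp s (hθ s).hasDerivAt
  have h2 : HasDerivAt (fun t => R * κ t * σ t)
      ((R * deriv κ s) * σ s + (R * κ s) * deriv σ s) s :=
    (((hκ s).hasDerivAt.const_mul R).mul (hσ s).hasDerivAt)
  have hfun : (fun t => Real.tan (θ t)) = fun t => R * κ t * σ t := funext htan
  have heq : 1 / Real.cos (θ s) ^ 2 * deriv θ s
      = (R * deriv κ s) * σ s + (R * κ s) * deriv σ s := by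
    have := (hfun ▸ h1).unique h2
    exact this
  have hsec : 1 / Real.cos (θ s) ^ 2 = (R * κ s * σ s) ^ 2 + 1 := by
    have h3 : Real.sin (θ s) ^ 2 + Real.cos (θ s) ^ 2 = 1 := Real.sin_sq_add_cos_sq _
    have h4 : Real.tan (θ s) = Real.sin (θ s) / Real.cos (θ s) := Real.tan_eq_sin_div_cos _
    have h5 := htan s
    rw [h4] at h5
    have hc := hcos s
    field_simp at h5 ⊢
    have h6 : Real.sin (θ s) ^ 2 = (R * κ s * σ s) ^ 2 * Real.cos (θ s) ^ 2 := by
      rw [h5]; ring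
    nlinarith [h3, h6]
  rw [hθ' s, hsec] at heq
  have hσs := (hσpos s).ne'
  field_simp
  nlinarith [heq, hσpos s]
end

section
/- Let q, h, a be the Frenet frame of a developable timelike ruled surface φ of type M₋¹ with striction curve c, c' = q, and Frenet equations q' = σ h, h' = σ q + σκ a, a' = -σκ h with σκ ≠ 0. Then the ruled surface φ_{h*}(s,v) = c*(s) + v a(s) (where c* = c + R a, R constant) has nonzero distribution parameter p_{h*} = -1/(σκ); in particular φ_{h*} is nondevelopable. -/
/-- Lorentzian triple product. -/
def mtriple (u v w : Fin 3 → ℝ) : ℝ := mdot (mcross u v) w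


/-!
Shifting the base curve along the rulings, `c + R a + v a`, only reparametrizes the rulings of
`c + v a`, so the distribution parameter `[c', a, a'] / ⟨a', a'⟩` is unchanged. With `c' = q` and
`a' = -σκ h`, the triple product is `[q, a, -σκ h] = σκ [q, h, a] = σκ ⟨q × h, a⟩ = -σκ` and
`⟨a', a'⟩ = (σκ)²`, giving `-1 / (σκ)`.
-/

section Minkowski

variable (u v w : Fin 3 → ℝ) (r : ℝ)

theorem mdot_neg_left : mdot (-u) v = -mdot u v := by
  simp only [mdot, Pi.neg_apply]; ring

theorem mdot_smul_left : mdot (r • u) v = r * mdot u v := by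
  simp only [mdot, Pi.smul_apply, smul_eq_mul]; ring

theorem mdot_smul_right : mdot u (r • v) = r * mdot u v := by
  simp only [mdot, Pi.smul_apply, smul_eq_mul]; ring

theorem mtriple_add_smul_right_left : mtriple (u + r • w) v w = mtriple u v w := by
  simp only [mtriple, mcross, mdot, Pi.add_apply, Pi.smul_apply, smul_eq_mul,
    Matrix.cons_val_zero, Matrix.cons_val_one, Matrix.cons_val_two, Matrix.head_cons,
    Matrix.tail_cons]
  ring

theorem mtriple_smul_right : mtriple u v (r • w) = r * mtriple u v w :=
  mdot_smul_right _ _ _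

theorem mtriple_swap_right : mtriple u w v = -mtriple u v w := by
  simp only [mtriple, mcross, mdot, Matrix.cons_val_zero, Matrix.cons_val_one,
    Matrix.cons_val_two, Matrix.head_cons, Matrix.tail_cons]
  ring

end Minkowski

/-- The distribution parameter at `s` of the ruled surface `(s, v) ↦ β s + v • e s`. -/
noncomputable def distParam (β e : ℝ → Fin 3 → ℝ) (s : ℝ) : ℝ :=
  mtriple (deriv β s) (e s) (deriv e s) / mdot (deriv e s) (deriv e s)

theorem distParam_add_const_smul {β e : ℝ → Fin 3 → ℝ} {s : ℝ} (hβ : DifferentiableAt ℝ β s)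
    (he : DifferentiableAt ℝ e s) (R : ℝ) :
    distParam (fun t => β t + R • e t) e s = distParam β e s := by
  have hderiv : deriv (fun t => β t + R • e t) s = deriv β s + R • deriv e s := by
    rw [deriv_fun_add hβ (he.const_smul R) (g := fun t => R • e t), deriv_fun_const_smul R he]
  rw [distParam, distParam, hderiv, mtriple_add_smul_right_left]

theorem mtriple_eq_one_of_mcross_eq_neg {q h a : Fin 3 → ℝ} (hor : mcross q h = -a)
    (haa : mdot a a = 1) : mtriple q a h = 1 := by
  rw [mtriple_swap_right, mtriple, hor, mdot_neg_left, haa, neg_neg]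

theorem offset_h_star_nondevelopable_general (q h a c : ℝ → Fin 3 → ℝ)
    (κ σ : ℝ → ℝ) (R : ℝ)
    (ha : Differentiable ℝ a)
    (hc : Differentiable ℝ c)
    (hhh : ∀ s, mdot (h s) (h s) = 1)
    (haa : ∀ s, mdot (a s) (a s) = 1)
    (hor : ∀ s, mcross (q s) (h s) = -(a s))
    (fa : ∀ s, deriv a s = -(σ s * κ s) • h s)
    (fc : ∀ s, deriv c s = q s)
    (hσκ : ∀ s, σ s * κ s ≠ 0) :
    ∀ s, mtriple (deriv (fun t => c t + R • a t) s) (a s) (deriv a s)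
          / mdot (deriv a s) (deriv a s) = -(1 / (σ s * κ s)) ∧
        -(1 / (σ s * κ s)) ≠ 0 := by
  intro s
  have hk := hσκ s
  refine ⟨?_, neg_ne_zero.mpr (one_div_ne_zero hk)⟩
  change distParam (fun t => c t + R • a t) a s = _
  rw [distParam_add_const_smul (hc s) (ha s), distParam, fc, fa, mtriple_smul_right,
    mtriple_eq_one_of_mcross_eq_neg (hor s) (haa s), mdot_smul_left, mdot_smul_right, hhh]
  field_simp

/-- The surface generated by h* = a over c* = c + R a (Mannheim offset data of a
developable timelike ruled surface of type M₋¹) has distribution parameter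
p_{h*} = -1/(σκ) ≠ 0, hence is nondevelopable. -/
theorem offset_h_star_nondevelopable (q h a c : ℝ → Fin 3 → ℝ)
    (κ σ : ℝ → ℝ) (R : ℝ)
    (hq : Differentiable ℝ q) (hh : Differentiable ℝ h) (ha : Differentiable ℝ a)
    (hc : Differentiable ℝ c)
    (hqq : ∀ s, mdot (q s) (q s) = -1)
    (hhh : ∀ s, mdot (h s) (h s) = 1)
    (haa : ∀ s, mdot (a s) (a s) = 1)
    (hqh : ∀ s, mdot (q s) (h s) = 0)
    (hqa : ∀ s, mdot (q s) (a s) = 0)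
    (hha : ∀ s, mdot (h s) (a s) = 0)
    (hor : ∀ s, mcross (q s) (h s) = -(a s))
    (fq : ∀ s, deriv q s = σ s • h s)
    (fh : ∀ s, deriv h s = σ s • q s + (σ s * κ s) • a s)
    (fa : ∀ s, deriv a s = -(σ s * κ s) • h s)
    (fc : ∀ s, deriv c s = q s)
    (hσκ : ∀ s, σ s * κ s ≠ 0) :
    ∀ s, mtriple (deriv (fun t => c t + R • a t) s) (a s) (deriv a s)
          / mdot (deriv a s) (deriv a s) = -(1 / (σ s * κ s)) ∧
        -(1 / (σ s * κ s)) ≠ 0 :=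
  offset_h_star_nondevelopable_general q h a c κ σ R ha hc hhh haa hor fa fc hσκ
end
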